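/- Let X be an n × p real matrix, u ∈ ℝᵖ, S ⊆ {1,…,m}, λ₁,…,λ_m > 0, and ℓ ≥ 1. Define λ₋² = min{ Σ_{j ∈ S'} λ_j² : S' ⊆ {1,…,m}, |G_{S'}| ≥ ℓ }. Let S₀ ⊆ {1,…,m} \ S consist of indices j with the largest values of ‖u_{G_j}‖₂/λ_j among j ∉ S, chosen so that ℓ ≤ |G_{S₀}| < ℓ + k₀, and set G = G_S ∪ G_{S₀}. Let ρ̃₊ = √((ρ₊(G) − ρ₋(|G| + ℓ + k₀ − 1))(ρ₊(ℓ + k₀ − 1) − ρ₋(|G| + ℓ + k₀ − 1))). Then (1/n) | Σ_{j ∉ S ∪ S₀} u_Gᵀ X_Gᵀ X_{G_j} u_{G_j} | ≤ λ₋^{−1} ρ̃₊ ‖u_G‖₂ Σ_{j ∉ S} λ_j ‖u_{G_j}‖₂. -/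

import Mathlib

open Matrix MeasureTheory ProbabilityTheory

noncomputable def norm2 {ι : Type*} [Fintype ι] (v : ι → ℝ) : ℝ :=
  Real.sqrt (∑ i, v i ^ 2)

open scoped Classical in
noncomputable def invSqrt {ι : Type*} [Fintype ι] [DecidableEq ι] (M : Matrix ι ι ℝ) :
    Matrix ι ι ℝ :=
  if h : M.PosSemidef then
    ((h.1.eigenvectorUnitary : Matrix ι ι ℝ) * diagonal (fun i => Real.sqrt (h.1.eigenvalues i)) *
      (star h.1.eigenvectorUnitary : Matrix ι ι ℝ))⁻¹ else 0

def colSub {n p : ℕ} (X : Matrix (Fin n) (Fin p) ℝ) (F : Finset (Fin p)) :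
    Matrix (Fin n) {i : Fin p // i ∈ F} ℝ :=
  Matrix.of fun r c => X r c.1

noncomputable def groupProj {n p : ℕ} (X : Matrix (Fin n) (Fin p) ℝ) (F : Finset (Fin p))
    (v : Fin n → ℝ) : ℝ :=
  norm2 ((invSqrt ((colSub X F)ᵀ * colSub X F)) *ᵥ ((colSub X F)ᵀ *ᵥ v))

def restr {p : ℕ} (F : Finset (Fin p)) (β : Fin p → ℝ) : Fin p → ℝ :=
  fun i => if i ∈ F then β i else 0

/-- `G` is a partition of the index set into disjoint groups. -/
def IsPartition {p m : ℕ} (G : Fin m → Finset (Fin p)) : Prop :=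
  (∀ j₁ j₂, j₁ ≠ j₂ → Disjoint (G j₁) (G j₂)) ∧ Finset.univ.biUnion G = Finset.univ

/-- `β` is `(g, k)` strongly group-sparse. -/
def SGS {p m : ℕ} (G : Fin m → Finset (Fin p)) (g k : ℕ) (β : Fin p → ℝ) : Prop :=
  ∃ S : Finset (Fin m), S.card ≤ g ∧ (S.biUnion G).card ≤ k ∧
    ∀ i, β i ≠ 0 → i ∈ S.biUnion G

noncomputable def rhoMinusF {n p : ℕ} (X : Matrix (Fin n) (Fin p) ℝ) (F : Finset (Fin p)) : ℝ :=
  sInf {r : ℝ | ∃ β : Fin p → ℝ, β ≠ 0 ∧ (∀ i ∉ F, β i = 0) ∧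
    r = norm2 (X *ᵥ β) ^ 2 / (n * norm2 β ^ 2)}

noncomputable def rhoPlusF {n p : ℕ} (X : Matrix (Fin n) (Fin p) ℝ) (F : Finset (Fin p)) : ℝ :=
  sSup {r : ℝ | ∃ β : Fin p → ℝ, β ≠ 0 ∧ (∀ i ∉ F, β i = 0) ∧
    r = norm2 (X *ᵥ β) ^ 2 / (n * norm2 β ^ 2)}

noncomputable def rhoMinusN {n p m : ℕ} (X : Matrix (Fin n) (Fin p) ℝ)
    (G : Fin m → Finset (Fin p)) (s : ℕ) : ℝ :=
  sInf {r : ℝ | ∃ S : Finset (Fin m), (S.biUnion G).card ≤ s ∧ r = rhoMinusF X (S.biUnion G)}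

noncomputable def rhoPlusN {n p m : ℕ} (X : Matrix (Fin n) (Fin p) ℝ)
    (G : Fin m → Finset (Fin p)) (s : ℕ) : ℝ :=
  sSup {r : ℝ | ∃ S : Finset (Fin m), (S.biUnion G).card ≤ s ∧ r = rhoPlusF X (S.biUnion G)}

/-- The group Lasso objective. -/
noncomputable def glObj {n p m : ℕ} (X : Matrix (Fin n) (Fin p) ℝ)
    (G : Fin m → Finset (Fin p)) (lam : Fin m → ℝ) (y : Fin n → ℝ) (β : Fin p → ℝ) : ℝ :=
  (1 / (n : ℝ)) * norm2 (X *ᵥ β - y) ^ 2 + ∑ j, lam j * norm2 (restr (G j) β)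

/-!
Sort the groups outside `S ∪ S₀` by decreasing `‖u_{G_j}‖ / λ_j` and cut them into consecutive
blocks of `ℓ` to `ℓ + k₀ - 1` coordinates. On a block `B` the form `‖X v‖² / n - ρ₋ ‖v‖²` is
positive semidefinite on `G ∪ G_B`, so Cauchy–Schwarz for it bounds the block's part of the cross
term by `ρ̃₊ ‖u_G‖ ‖u_{G_B}‖`. The block preceding `B` (for the first block, `S₀`) has at least `ℓ`
coordinates and larger ratios, which gives `λ₋ ‖u_{G_B}‖ ≤ (μ(previous) + μ(B)) / 2` with
`μ(C) = ∑_{j ∈ C} λ_j ‖u_{G_j}‖`; the sum over the blocks telescopes.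
-/

namespace GroupLasso

open Finset

lemma norm2_nonneg {ι : Type*} [Fintype ι] (v : ι → ℝ) : 0 ≤ norm2 v := Real.sqrt_nonneg _

lemma norm2_sq {ι : Type*} [Fintype ι] (v : ι → ℝ) : norm2 v ^ 2 = v ⬝ᵥ v := by
  rw [norm2, Real.sq_sqrt (sum_nonneg fun i _ => sq_nonneg (v i))]
  simp only [dotProduct, sq]

lemma norm2_sq_pos {ι : Type*} [Fintype ι] {v : ι → ℝ} (hv : v ≠ 0) : 0 < norm2 v ^ 2 :=
  (sq_nonneg _).lt_of_ne fun h => hv (dotProduct_self_eq_zero.1 (norm2_sq v ▸ h.symm))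

lemma norm2_restr_sq {p : ℕ} (F : Finset (Fin p)) (u : Fin p → ℝ) :
    norm2 (restr F u) ^ 2 = ∑ i ∈ F, u i ^ 2 := by
  rw [norm2, Real.sq_sqrt (sum_nonneg fun i _ => sq_nonneg _)]
  simp [restr, ite_pow, sum_ite_mem]

lemma restr_biUnion {p m : ℕ} {G : Fin m → Finset (Fin p)}
    (hG : ∀ j₁ j₂, j₁ ≠ j₂ → Disjoint (G j₁) (G j₂)) (B : Finset (Fin m)) (u : Fin p → ℝ) :
    restr (B.biUnion G) u = ∑ j ∈ B, restr (G j) u := by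
  ext i
  simp only [Finset.sum_apply, restr]
  by_cases hi : i ∈ B.biUnion G
  · obtain ⟨j₀, hj₀B, hij₀⟩ := mem_biUnion.mp hi
    rw [if_pos hi, sum_eq_single_of_mem j₀ hj₀B fun j _ hj =>
      if_neg (disjoint_right.mp (hG j j₀ hj) hij₀), if_pos hij₀]
  · rw [if_neg hi]
    exact (sum_eq_zero fun j hj => if_neg fun hij => hi (mem_biUnion.mpr ⟨j, hj, hij⟩)).symm

lemma norm2_restr_biUnion {p m : ℕ} {G : Fin m → Finset (Fin p)}
    (hG : ∀ j₁ j₂, j₁ ≠ j₂ → Disjoint (G j₁) (G j₂)) (B : Finset (Fin m)) (u : Fin p → ℝ) :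
    norm2 (restr (B.biUnion G) u) = √(∑ j ∈ B, norm2 (restr (G j) u) ^ 2) := by
  rw [← Real.sqrt_sq (norm2_nonneg _), norm2_restr_sq, sum_biUnion fun j₁ _ j₂ _ h => hG j₁ j₂ h]
  simp only [norm2_restr_sq]

lemma restr_dotProduct_restr {p : ℕ} {A B : Finset (Fin p)} (hAB : Disjoint A B)
    (u v : Fin p → ℝ) : restr A u ⬝ᵥ restr B v = 0 :=
  sum_eq_zero fun i _ => by
    by_cases hA : i ∈ A
    · simp [restr, disjoint_left.mp hAB hA]
    · simp [restr, hA]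

lemma norm2_mulVec_sq_le {n p : ℕ} (X : Matrix (Fin n) (Fin p) ℝ) (v : Fin p → ℝ) :
    norm2 (X *ᵥ v) ^ 2 ≤ (∑ r, ∑ i, X r i ^ 2) * norm2 v ^ 2 := by
  rw [norm2, norm2, Real.sq_sqrt (sum_nonneg fun _ _ => sq_nonneg _),
    Real.sq_sqrt (sum_nonneg fun _ _ => sq_nonneg _), sum_mul]
  exact sum_le_sum fun r _ => sum_mul_sq_le_sq_mul_sq univ (X r) v

section Rayleigh

variable {n p : ℕ} (X : Matrix (Fin n) (Fin p) ℝ)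

lemma rayleigh_le_frobenius (β : Fin p → ℝ) :
    norm2 (X *ᵥ β) ^ 2 / (n * norm2 β ^ 2) ≤ (∑ r, ∑ i, X r i ^ 2) / n := by
  rw [mul_comm, ← div_div]
  exact div_le_div_of_nonneg_right (div_le_of_le_mul₀ (sq_nonneg _) (by positivity)
    (norm2_mulVec_sq_le X β)) n.cast_nonneg

lemma rhoMinusF_nonneg (F : Finset (Fin p)) : 0 ≤ rhoMinusF X F :=
  Real.sInf_nonneg (by rintro r ⟨β, -, -, rfl⟩; positivity)

lemma rhoPlusF_le_frobenius (F : Finset (Fin p)) :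
    rhoPlusF X F ≤ (∑ r, ∑ i, X r i ^ 2) / n :=
  Real.sSup_le (by rintro r ⟨β, -, -, rfl⟩; exact rayleigh_le_frobenius X β) (by positivity)

lemma rhoMinusF_mul_le {F : Finset (Fin p)} {v : Fin p → ℝ} (hv : ∀ i ∉ F, v i = 0) :
    rhoMinusF X F * norm2 v ^ 2 ≤ norm2 (X *ᵥ v) ^ 2 / n := by
  rcases eq_or_ne v 0 with rfl | hv0
  · simp [norm2]
  have hpos := norm2_sq_pos hv0
  have hle : rhoMinusF X F ≤ norm2 (X *ᵥ v) ^ 2 / (n * norm2 v ^ 2) := by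
    refine csInf_le ⟨0, ?_⟩ ⟨v, hv0, hv, rfl⟩
    rintro r ⟨β, -, -, rfl⟩
    positivity
  calc rhoMinusF X F * norm2 v ^ 2 ≤ norm2 (X *ᵥ v) ^ 2 / (n * norm2 v ^ 2) * norm2 v ^ 2 :=
        mul_le_mul_of_nonneg_right hle hpos.le
    _ = norm2 (X *ᵥ v) ^ 2 / n := by rw [div_mul_eq_mul_div, mul_div_mul_right _ _ hpos.ne']

lemma le_rhoPlusF_mul {F : Finset (Fin p)} {v : Fin p → ℝ} (hv : ∀ i ∉ F, v i = 0) :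
    norm2 (X *ᵥ v) ^ 2 / n ≤ rhoPlusF X F * norm2 v ^ 2 := by
  rcases eq_or_ne v 0 with rfl | hv0
  · simp [norm2]
  have hpos := norm2_sq_pos hv0
  have hle : norm2 (X *ᵥ v) ^ 2 / (n * norm2 v ^ 2) ≤ rhoPlusF X F := by
    refine le_csSup ⟨(∑ r, ∑ i, X r i ^ 2) / n, ?_⟩ ⟨v, hv0, hv, rfl⟩
    rintro r ⟨β, -, -, rfl⟩
    exact rayleigh_le_frobenius X β
  calc norm2 (X *ᵥ v) ^ 2 / n = norm2 (X *ᵥ v) ^ 2 / (n * norm2 v ^ 2) * norm2 v ^ 2 := by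
        rw [div_mul_eq_mul_div, mul_div_mul_right _ _ hpos.ne']
    _ ≤ rhoPlusF X F * norm2 v ^ 2 := mul_le_mul_of_nonneg_right hle hpos.le

variable {m : ℕ} {G : Fin m → Finset (Fin p)}

lemma rhoMinusN_le_rhoMinusF {s : ℕ} {S : Finset (Fin m)} (hS : (S.biUnion G).card ≤ s) :
    rhoMinusN X G s ≤ rhoMinusF X (S.biUnion G) := by
  refine csInf_le ⟨0, ?_⟩ ⟨S, hS, rfl⟩
  rintro r ⟨S', -, rfl⟩
  exact rhoMinusF_nonneg X _

lemma rhoPlusF_le_rhoPlusN {s : ℕ} {S : Finset (Fin m)} (hS : (S.biUnion G).card ≤ s) :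
    rhoPlusF X (S.biUnion G) ≤ rhoPlusN X G s := by
  refine le_csSup ⟨(∑ r, ∑ i, X r i ^ 2) / n, ?_⟩ ⟨S, hS, rfl⟩
  rintro r ⟨S', -, rfl⟩
  exact rhoPlusF_le_frobenius X _

end Rayleigh

lemma sq_le_mul_of_forall_quadratic_nonneg {a b d : ℝ}
    (h : ∀ t : ℝ, 0 ≤ a + 2 * d * t + b * t ^ 2) : d ^ 2 ≤ a * b := by
  have := discrim_le_zero (a := b) (b := 2 * d) (c := a) fun t => by linarith [h t]
  rw [discrim] at this
  linarith

section CrossTerm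

variable {n p : ℕ} (X : Matrix (Fin n) (Fin p) ℝ)

/-- Cauchy–Schwarz for the positive semidefinite form `‖X v‖² / n - c ‖v‖²` on vectors supported
in `A ∪ B`; since `a ⬝ᵥ b = 0`, its polarization at `(a, b)` is the cross term. -/
theorem abs_dotProduct_mulVec_div_le {A B : Finset (Fin p)} {a b : Fin p → ℝ}
    (ha : ∀ i ∉ A, a i = 0) (hb : ∀ i ∉ B, b i = 0) (hab : a ⬝ᵥ b = 0) {c rA rB : ℝ}
    (hc : c ≤ rhoMinusF X (A ∪ B)) (hrA : rhoPlusF X A ≤ rA) (hrB : rhoPlusF X B ≤ rB) :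
    |(X *ᵥ a) ⬝ᵥ (X *ᵥ b)| / n ≤ √((rA - c) * (rB - c)) * norm2 a * norm2 b := by
  set q : (Fin p → ℝ) → ℝ := fun v => norm2 (X *ᵥ v) ^ 2 / n - c * norm2 v ^ 2 with hq
  have hq_nonneg : ∀ v : Fin p → ℝ, (∀ i ∉ A ∪ B, v i = 0) → 0 ≤ q v := fun v hv => by
    linarith [rhoMinusF_mul_le X hv, mul_le_mul_of_nonneg_right hc (sq_nonneg (norm2 v))]
  have hq_le : ∀ {F : Finset (Fin p)} {r : ℝ} {v : Fin p → ℝ}, (∀ i ∉ F, v i = 0) →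
      rhoPlusF X F ≤ r → q v ≤ (r - c) * norm2 v ^ 2 := fun {_ _ v} hv hr => by
    linarith [le_rhoPlusF_mul X hv, mul_le_mul_of_nonneg_right hr (sq_nonneg (norm2 v))]
  have hqa := hq_nonneg a fun i hi => ha i fun h => hi (mem_union_left B h)
  have hqb := hq_nonneg b fun i hi => hb i fun h => hi (mem_union_right A h)
  have hexpand : ∀ t : ℝ,
      q (a + t • b) = q a + 2 * ((X *ᵥ a) ⬝ᵥ (X *ᵥ b) / n) * t + q b * t ^ 2 := fun t => by
    simp only [hq, norm2_sq, mulVec_add, mulVec_smul, add_dotProduct, dotProduct_add,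
      smul_dotProduct, dotProduct_smul, smul_eq_mul, dotProduct_comm b a, hab,
      dotProduct_comm (X *ᵥ b) (X *ᵥ a)]
    ring
  have hdisc := sq_le_mul_of_forall_quadratic_nonneg fun t => hexpand t ▸ hq_nonneg _ fun i hi => by
    simp only [Pi.add_apply, Pi.smul_apply, smul_eq_mul, ha i fun h => hi (mem_union_left B h),
      hb i fun h => hi (mem_union_right A h), mul_zero, add_zero]
  calc |(X *ᵥ a) ⬝ᵥ (X *ᵥ b)| / n = √(((X *ᵥ a) ⬝ᵥ (X *ᵥ b) / n) ^ 2) := by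
        rw [Real.sqrt_sq_eq_abs, abs_div, Nat.abs_cast]
    _ ≤ √(q a * q b) := Real.sqrt_le_sqrt hdisc
    _ ≤ √((rA - c) * norm2 a ^ 2 * ((rB - c) * norm2 b ^ 2)) :=
        Real.sqrt_le_sqrt (mul_le_mul (hq_le ha hrA) (hq_le hb hrB) hqb (hqa.trans (hq_le ha hrA)))
    _ = √((rA - c) * (rB - c)) * norm2 a * norm2 b := by
        rw [show (rA - c) * norm2 a ^ 2 * ((rB - c) * norm2 b ^ 2) =
            (rA - c) * (rB - c) * (norm2 a * norm2 b) ^ 2 by ring,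
          Real.sqrt_mul' _ (sq_nonneg _),
          Real.sqrt_sq (mul_nonneg (norm2_nonneg a) (norm2_nonneg b)), mul_assoc]

theorem abs_sum_dotProduct_groups_div_le {m : ℕ} {G : Fin m → Finset (Fin p)}
    (hG : ∀ j₁ j₂, j₁ ≠ j₂ → Disjoint (G j₁) (G j₂)) (u : Fin p → ℝ) {R B : Finset (Fin m)}
    (hRB : Disjoint R B) {s t : ℕ} (hBt : (B.biUnion G).card ≤ t)
    (hs : (R.biUnion G).card + t ≤ s) :
    |∑ j ∈ B, (X *ᵥ restr (R.biUnion G) u) ⬝ᵥ (X *ᵥ restr (G j) u) / n| ≤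
      √((rhoPlusF X (R.biUnion G) - rhoMinusN X G s) * (rhoPlusN X G t - rhoMinusN X G s)) *
        norm2 (restr (R.biUnion G) u) * √(∑ j ∈ B, norm2 (restr (G j) u) ^ 2) := by
  have hdisj : Disjoint (R.biUnion G) (B.biUnion G) :=
    (disjoint_biUnion_left _ _ _).2 fun j hj => (disjoint_biUnion_right _ _ _).2 fun j' hj' =>
      hG j j' fun h => disjoint_left.1 hRB hj (h ▸ hj')
  rw [← sum_div, ← dotProduct_sum, ← mulVec_sum, ← restr_biUnion hG, ← norm2_restr_biUnion hG,
    abs_div, Nat.abs_cast]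
  refine abs_dotProduct_mulVec_div_le X (fun i hi => if_neg hi) (fun i hi => if_neg hi)
    (restr_dotProduct_restr hdisj u u) ?_ le_rfl (rhoPlusF_le_rhoPlusN X hBt)
  rw [← union_biUnion]
  exact rhoMinusN_le_rhoMinusF X (by rw [union_biUnion]; exact (card_union_le _ _).trans (by omega))

end CrossTerm

lemma sq_mul_sum_sq_le {ι : Type*} {ν lam : ι → ℝ} (hν : ∀ j, 0 ≤ ν j) (hlam : ∀ j, 0 < lam j) {L : ℝ}
    {P B : Finset ι} (hP : L ^ 2 ≤ ∑ j ∈ P, lam j ^ 2)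
    (hPB : ∀ j ∈ B, ∀ j' ∈ P, ν j / lam j ≤ ν j' / lam j') :
    L ^ 2 * ∑ j ∈ B, ν j ^ 2 ≤ (∑ j ∈ P, lam j * ν j) * ∑ j ∈ B, lam j * ν j := by
  rw [mul_sum, mul_sum]
  refine sum_le_sum fun j hj => ?_
  have hratio : L ^ 2 * (ν j / lam j) ≤ ∑ j' ∈ P, lam j' * ν j' := calc
    L ^ 2 * (ν j / lam j) ≤ ∑ j' ∈ P, lam j' ^ 2 * (ν j / lam j) := by
      rw [← sum_mul]
      exact mul_le_mul_of_nonneg_right hP (div_nonneg (hν j) (hlam j).le)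
    _ ≤ ∑ j' ∈ P, lam j' ^ 2 * (ν j' / lam j') :=
      sum_le_sum fun j' hj' => mul_le_mul_of_nonneg_left (hPB j hj j' hj') (sq_nonneg _)
    _ = ∑ j' ∈ P, lam j' * ν j' := sum_congr rfl fun j' _ => by field_simp [(hlam j').ne']
  calc L ^ 2 * ν j ^ 2 = L ^ 2 * (ν j / lam j) * (lam j * ν j) := by field_simp [(hlam j).ne']
    _ ≤ (∑ j' ∈ P, lam j' * ν j') * (lam j * ν j) :=
      mul_le_mul_of_nonneg_right hratio (mul_nonneg (hlam j).le (hν j))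

lemma mul_sqrt_le_half_add {L s x y : ℝ} (hs : 0 ≤ s) (hx : 0 ≤ x) (hy : 0 ≤ y)
    (h : L ^ 2 * s ≤ x * y) : L * √s ≤ (x + y) / 2 := by
  nlinarith [sq_nonneg (x - y), Real.sq_sqrt hs, Real.sqrt_nonneg s]

section Shifting

variable {ι : Type*} [DecidableEq ι]

theorem exists_top_block (f : ι → ℝ) (w : ι → ℕ) {k : ℕ} (hw : ∀ j, w j ≤ k) (T : Finset ι) :
    ∀ ℓ, 0 < ℓ → ∃ B ⊆ T, ∑ j ∈ B, w j ≤ ℓ + k - 1 ∧ (B = T ∨ ℓ ≤ ∑ j ∈ B, w j) ∧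
      ∀ j ∈ B, ∀ j' ∈ T \ B, f j' ≤ f j := by
  induction T using Finset.strongInduction with
  | H T ih =>
    intro ℓ hℓ
    rcases T.eq_empty_or_nonempty with rfl | hT
    · exact ⟨∅, empty_subset _, by simp, Or.inl rfl, by simp⟩
    obtain ⟨a, haT, hmax⟩ := T.exists_max_image f hT
    by_cases ha : ℓ ≤ w a
    · refine ⟨{a}, singleton_subset_iff.2 haT, ?_, Or.inr (by simpa using ha), ?_⟩
      · simpa using (hw a).trans (by omega)
      · simpa using fun j' hj' _ => hmax j' hj'
    obtain ⟨B, hBT, hBw, hBfull, hBtop⟩ := ih (T.erase a) (erase_ssubset haT) (ℓ - w a) (by omega)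
    have haB : a ∉ B := fun h => notMem_erase a T (hBT h)
    refine ⟨insert a B, insert_subset haT (hBT.trans (erase_subset a T)), ?_, ?_, ?_⟩
    · rw [sum_insert haB]
      omega
    · rcases hBfull with rfl | hB
      · exact Or.inl (insert_erase haT)
      · right
        rw [sum_insert haB]
        omega
    · rw [sdiff_insert, ← erase_sdiff_comm]
      intro j hj j' hj'
      rcases mem_insert.1 hj with rfl | hjB
      · exact hmax j' (mem_of_mem_erase (mem_sdiff.1 hj').1)
      · exact hBtop j hjB j' hj'

theorem abs_sum_le_of_shifting (d ν lam : ι → ℝ) (w : ι → ℕ) {k ℓ : ℕ} {L K : ℝ} (hL : 0 < L)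
    (hK : 0 ≤ K) (hν : ∀ j, 0 ≤ ν j) (hlam : ∀ j, 0 < lam j) (hw : ∀ j, w j ≤ k) (hℓ : 0 < ℓ)
    (hfull : ∀ B : Finset ι, ℓ ≤ ∑ j ∈ B, w j → L ^ 2 ≤ ∑ j ∈ B, lam j ^ 2) (T : Finset ι)
    (hblock : ∀ B ⊆ T, ∑ j ∈ B, w j ≤ ℓ + k - 1 → |∑ j ∈ B, d j| ≤ K * √(∑ j ∈ B, ν j ^ 2))
    (P : Finset ι) (hP : L ^ 2 ≤ ∑ j ∈ P, lam j ^ 2)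
    (hPT : ∀ j ∈ T, ∀ j' ∈ P, ν j / lam j ≤ ν j' / lam j') :
    |∑ j ∈ T, d j| ≤ L⁻¹ * K * ((∑ j ∈ P, lam j * ν j) / 2 + ∑ j ∈ T, lam j * ν j) := by
  induction T using Finset.strongInduction generalizing P with
  | H T ih =>
    have hmass : ∀ Q : Finset ι, 0 ≤ ∑ j ∈ Q, lam j * ν j :=
      fun Q => sum_nonneg fun j _ => mul_nonneg (hlam j).le (hν j)
    obtain ⟨B, hBT, hBw, hBfull, hBtop⟩ := exists_top_block (fun j => ν j / lam j) w hw T ℓ hℓ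
    have hB : |∑ j ∈ B, d j| ≤
        L⁻¹ * K * ((∑ j ∈ P, lam j * ν j + ∑ j ∈ B, lam j * ν j) / 2) := calc
      |∑ j ∈ B, d j| ≤ K * √(∑ j ∈ B, ν j ^ 2) := hblock B hBT hBw
      _ = L⁻¹ * K * (L * √(∑ j ∈ B, ν j ^ 2)) := by field_simp
      _ ≤ _ := mul_le_mul_of_nonneg_left (mul_sqrt_le_half_add
          (sum_nonneg fun j _ => sq_nonneg _) (hmass P) (hmass B)
          (sq_mul_sum_sq_le hν hlam hP fun j hj => hPT j (hBT hj))) (by positivity)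
    rcases hBfull with rfl | hBℓ
    · exact hB.trans (mul_le_mul_of_nonneg_left (by linarith [hmass B]) (by positivity))
    have hBne : B.Nonempty := nonempty_of_sum_ne_zero (f := w) (by omega)
    have hrest := ih (T \ B) (sdiff_ssubset hBT hBne)
      (fun B' hB' => hblock B' (hB'.trans sdiff_subset)) B (hfull B hBℓ)
      (fun j hj j' hj' => hBtop j' hj' j hj)
    rw [← sum_sdiff hBT, ← sum_sdiff hBT (f := fun j => lam j * ν j)]
    calc |∑ j ∈ T \ B, d j + ∑ j ∈ B, d j| ≤ |∑ j ∈ T \ B, d j| + |∑ j ∈ B, d j| := abs_add_le _ _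
      _ ≤ L⁻¹ * K * ((∑ j ∈ B, lam j * ν j) / 2 + ∑ j ∈ T \ B, lam j * ν j) +
          L⁻¹ * K * ((∑ j ∈ P, lam j * ν j + ∑ j ∈ B, lam j * ν j) / 2) := add_le_add hrest hB
      _ = _ := by ring

end Shifting

lemma sInf_sum_sq_pos {m p : ℕ} {G : Fin m → Finset (Fin p)} {lam : Fin m → ℝ}
    (hlam : ∀ j, 0 < lam j) {ℓ : ℕ} (hℓ : 1 ≤ ℓ) {S₀ : Finset (Fin m)}
    (hS₀ : ℓ ≤ (S₀.biUnion G).card) :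
    0 < sInf {r : ℝ | ∃ S : Finset (Fin m), ℓ ≤ (S.biUnion G).card ∧ r = ∑ j ∈ S, lam j ^ 2} := by
  set R := {r : ℝ | ∃ S : Finset (Fin m), ℓ ≤ (S.biUnion G).card ∧ r = ∑ j ∈ S, lam j ^ 2}
  have hR : R.Finite := (Set.finite_range fun S : Finset (Fin m) => ∑ j ∈ S, lam j ^ 2).subset
    (by rintro r ⟨S, -, rfl⟩; exact ⟨S, rfl⟩)
  obtain ⟨S, hS, hr⟩ := Set.Nonempty.csInf_mem (show R.Nonempty from ⟨_, S₀, hS₀, rfl⟩) hR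
  rw [hr]
  refine sum_pos (fun j _ => pow_pos (hlam j) 2) (nonempty_iff_ne_empty.2 ?_)
  rintro rfl
  simp only [biUnion_empty, card_empty] at hS
  omega

lemma sInf_sum_sq_le {m p : ℕ} {G : Fin m → Finset (Fin p)} (lam : Fin m → ℝ) {ℓ : ℕ}
    {B : Finset (Fin m)} (hB : ℓ ≤ (B.biUnion G).card) :
    sInf {r : ℝ | ∃ S : Finset (Fin m), ℓ ≤ (S.biUnion G).card ∧ r = ∑ j ∈ S, lam j ^ 2} ≤
      ∑ j ∈ B, lam j ^ 2 := by
  refine csInf_le ⟨0, ?_⟩ ⟨B, hB, rfl⟩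
  rintro r ⟨S, -, rfl⟩
  positivity

end GroupLasso

open GroupLasso Finset in
theorem stmt_12_general (n p m : ℕ) (X : Matrix (Fin n) (Fin p) ℝ)
    (G : Fin m → Finset (Fin p)) (hG : IsPartition G)
    (k0 : ℕ) (hk0 : k0 = Finset.univ.sup fun j => (G j).card)
    (u : Fin p → ℝ) (S : Finset (Fin m)) (lam : Fin m → ℝ) (hlam : ∀ j, 0 < lam j)
    (ℓ : ℕ) (hℓ : 1 ≤ ℓ)
    (lamMinus : ℝ)
    (hlamMinus : lamMinus = Real.sqrt (sInf {r : ℝ | ∃ S' : Finset (Fin m),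
      ℓ ≤ (S'.biUnion G).card ∧ r = ∑ j ∈ S', lam j ^ 2}))
    (S0 : Finset (Fin m)) (hS0S : Disjoint S0 S)
    (hS0top : ∀ j ∈ S0, ∀ j', j' ∉ S → j' ∉ S0 →
      norm2 (restr (G j') u) / lam j' ≤ norm2 (restr (G j) u) / lam j)
    (hcard1 : ℓ ≤ (S0.biUnion G).card)
    (Gset : Finset (Fin p)) (hGset : Gset = S.biUnion G ∪ S0.biUnion G)
    (ρt : ℝ)
    (hρt : ρt = Real.sqrt ((rhoPlusF X Gset - rhoMinusN X G (Gset.card + ℓ + k0 - 1)) *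
      (rhoPlusN X G (ℓ + k0 - 1) - rhoMinusN X G (Gset.card + ℓ + k0 - 1)))) :
    (1 / (n : ℝ)) *
        |∑ j ∈ Finset.univ \ (S ∪ S0), (X *ᵥ restr Gset u) ⬝ᵥ (X *ᵥ restr (G j) u)| ≤
      lamMinus⁻¹ * ρt * norm2 (restr Gset u) *
        ∑ j ∈ Finset.univ \ S, lam j * norm2 (restr (G j) u) := by
  obtain ⟨hdisj, -⟩ := hG
  rw [← union_biUnion] at hGset
  subst hGset
  have hcard : ∀ B : Finset (Fin m), (B.biUnion G).card = ∑ j ∈ B, (G j).card :=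
    fun B => card_biUnion fun j₁ _ j₂ _ h => hdisj j₁ j₂ h
  have hL : 0 < lamMinus := hlamMinus ▸ Real.sqrt_pos.2 (sInf_sum_sq_pos hlam hℓ hcard1)
  have hfull : ∀ B : Finset (Fin m), ℓ ≤ ∑ j ∈ B, (G j).card →
      lamMinus ^ 2 ≤ ∑ j ∈ B, lam j ^ 2 := fun B hB => by
    rw [hlamMinus, Real.sq_sqrt (sInf_sum_sq_pos hlam hℓ hcard1).le]
    exact sInf_sum_sq_le lam ((hcard B).symm ▸ hB)
  have hK : 0 ≤ ρt * norm2 (restr ((S ∪ S0).biUnion G) u) :=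
    mul_nonneg (hρt ▸ Real.sqrt_nonneg _) (norm2_nonneg _)
  have hshift := abs_sum_le_of_shifting _ _ lam (fun j => (G j).card) hL hK
    (fun j => norm2_nonneg _) hlam (fun j => hk0 ▸ le_sup (f := fun j => (G j).card) (mem_univ j))
    hℓ hfull (univ \ (S ∪ S0))
    (fun B hB hBw => hρt ▸ abs_sum_dotProduct_groups_div_le X hdisj u
      (disjoint_of_subset_right hB disjoint_sdiff) ((hcard B).trans_le hBw) (by omega))
    S0 (hfull S0 (hcard S0 ▸ hcard1)) fun j hj j' hj' =>
      hS0top j' hj' j (fun h => (mem_sdiff.1 hj).2 (mem_union_left S0 h))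
        (fun h => (mem_sdiff.1 hj).2 (mem_union_right S h))
  have hS0 : S0 ⊆ univ \ S := subset_sdiff.2 ⟨subset_univ S0, hS0S⟩
  rw [one_div_mul_eq_div, ← Nat.abs_cast, ← abs_div, sum_div, ← sum_sdiff hS0, sdiff_sdiff_left,
    sup_eq_union, mul_assoc lamMinus⁻¹ ρt]
  refine hshift.trans (mul_le_mul_of_nonneg_left ?_ (mul_nonneg (inv_nonneg.2 hL.le) hK))
  linarith [sum_nonneg fun j (_ : j ∈ S0) => mul_nonneg (hlam j).le (norm2_nonneg (restr (G j) u))]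

/-- second inequality of Lemma 9: with the setup of Statement 11,
`G = G_S ∪ G_{S₀}` and
`ρ̃₊ = √((ρ₊(G) - ρ₋(|G|+ℓ+k₀-1))(ρ₊(ℓ+k₀-1) - ρ₋(|G|+ℓ+k₀-1)))`, we have
`(1/n)|Σ_{j ∉ S ∪ S₀} u_Gᵀ X_Gᵀ X_{G_j} u_{G_j}| ≤ λ₋⁻¹ ρ̃₊ ‖u_G‖₂ Σ_{j ∉ S} λ_j ‖u_{G_j}‖₂`. -/
theorem stmt_12 (n p m : ℕ) (X : Matrix (Fin n) (Fin p) ℝ)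
    (G : Fin m → Finset (Fin p)) (hG : IsPartition G)
    (k0 : ℕ) (hk0 : k0 = Finset.univ.sup fun j => (G j).card)
    (u : Fin p → ℝ) (S : Finset (Fin m)) (lam : Fin m → ℝ) (hlam : ∀ j, 0 < lam j)
    (ℓ : ℕ) (hℓ : 1 ≤ ℓ)
    (lamMinus : ℝ)
    (hlamMinus : lamMinus = Real.sqrt (sInf {r : ℝ | ∃ S' : Finset (Fin m),
      ℓ ≤ (S'.biUnion G).card ∧ r = ∑ j ∈ S', lam j ^ 2}))
    (S0 : Finset (Fin m)) (hS0S : Disjoint S0 S)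
    (hS0top : ∀ j ∈ S0, ∀ j', j' ∉ S → j' ∉ S0 →
      norm2 (restr (G j') u) / lam j' ≤ norm2 (restr (G j) u) / lam j)
    (hcard1 : ℓ ≤ (S0.biUnion G).card) (hcard2 : (S0.biUnion G).card < ℓ + k0)
    (Gset : Finset (Fin p)) (hGset : Gset = S.biUnion G ∪ S0.biUnion G)
    (ρt : ℝ)
    (hρt : ρt = Real.sqrt ((rhoPlusF X Gset - rhoMinusN X G (Gset.card + ℓ + k0 - 1)) *
      (rhoPlusN X G (ℓ + k0 - 1) - rhoMinusN X G (Gset.card + ℓ + k0 - 1)))) :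
    (1 / (n : ℝ)) *
        |∑ j ∈ Finset.univ \ (S ∪ S0), (X *ᵥ restr Gset u) ⬝ᵥ (X *ᵥ restr (G j) u)| ≤
      lamMinus⁻¹ * ρt * norm2 (restr Gset u) *
        ∑ j ∈ Finset.univ \ S, lam j * norm2 (restr (G j) u) :=
  stmt_12_general n p m X G hG k0 hk0 u S lam hlam ℓ hℓ lamMinus hlamMinus S0 hS0S hS0top hcard1
    Gset hGset ρt hρt
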